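/- Let p(x,y) be a real polynomial with exactly 3 monomials, 2 of which have positive coefficients and 1 has a negative coefficient, such that p(x,y) = 1 whenever x + y = 1. Then, up to swapping x and y, either p(x,y) = x² + 2y − y², or p(x,y) = αx + αy − (α−1) for some α > 1. -/

import Mathlib

/-!
Restricting `p` to the line `x = t, y = 1 - t` turns each monomial `x^i y^j` into `t^i (1 - t)^j`
and the hypothesis into a polynomial identity in `t`; such a polynomial determines `(i, j)` through
its trailing degree and degree. Evaluating the identity at `t = 0` and `t = 1` shows that the
coefficients of the monomials free of `x`, respectively of `y`, add up to `1`. A positive constant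
term is impossible (the other two terms would be proportional), so one positive monomial is a power
of `y` and the other a power of `x`. If the negative monomial is the constant, `t = 1/2` yields
`α x + α y - (α - 1)`; if it is mixed, `t = 1/2` yields a contradiction; if it is a pure power,
the coefficients of `t` and `t^2` yield `x^2 + 2y - y^2` up to swapping `x` and `y`.
-/

section Monomials

open MvPolynomial

lemma exists_eq_monomial_add_monomial_add_monomial {σ R : Type*} [CommSemiring R] [LinearOrder R]
    {p : MvPolynomial σ R}
    (hpos : (p.support.filter fun m => 0 < coeff m p).card = 2)
    (hneg : (p.support.filter fun m => coeff m p < 0).card = 1) :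
    ∃ u v w, u ≠ v ∧ u ≠ w ∧ v ≠ w ∧
      0 < p.coeff u ∧ 0 < p.coeff v ∧ p.coeff w < 0 ∧
      p = monomial u (p.coeff u) + monomial v (p.coeff v) + monomial w (p.coeff w) := by
  classical
  obtain ⟨u, v, huv, hP⟩ := Finset.card_eq_two.1 hpos
  obtain ⟨w, hN⟩ := Finset.card_eq_one.1 hneg
  have hu := (Finset.mem_filter.1 (hP ▸ Finset.mem_insert_self u {v})).2
  have hv :=
    (Finset.mem_filter.1 (hP ▸ Finset.mem_insert_of_mem (Finset.mem_singleton_self v))).2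
  have hw := (Finset.mem_filter.1 (hN ▸ Finset.mem_singleton_self w)).2
  have huw : u ≠ w := fun h => by rw [h] at hu; exact hu.not_gt hw
  have hvw : v ≠ w := fun h => by rw [h] at hv; exact hv.not_gt hw
  have hsupp : p.support = {u, v, w} := by
    have : p.support = p.support.filter fun m => 0 < p.coeff m ∨ p.coeff m < 0 :=
      (Finset.filter_true_of_mem fun m hm => (mem_support_iff.1 hm).lt_or_gt.symm).symm
    rw [this, Finset.filter_or, hP, hN, Finset.insert_union, Finset.singleton_union]
  refine ⟨u, v, w, huv, huw, hvw, hu, hv, hw, ?_⟩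
  conv_lhs => rw [← p.support_sum_monomial_coeff, hsupp]
  rw [Finset.sum_insert (by simp [huv, huw]), Finset.sum_insert (by simp [hvw]),
    Finset.sum_singleton, add_assoc]

noncomputable def xyMonomial (a : ℝ) (P : ℕ × ℕ) : MvPolynomial (Fin 2) ℝ :=
  C a * X 0 ^ P.1 * X 1 ^ P.2

lemma monomial_eq_xyMonomial (u : Fin 2 →₀ ℕ) (a : ℝ) :
    monomial u a = xyMonomial a (u 0, u 1) := by
  rw [monomial_eq, Finsupp.prod_fintype _ _ (fun _ => pow_zero _), Fin.prod_univ_two,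
    xyMonomial, mul_assoc]

lemma injective_fin_two_finsupp : Function.Injective fun u : Fin 2 →₀ ℕ => (u 0, u 1) := by
  intro u v h
  ext i
  fin_cases i
  exacts [congrArg Prod.fst h, congrArg Prod.snd h]

def IsStandardSolution (p : MvPolynomial (Fin 2) ℝ) : Prop :=
  ∃ σ : Equiv.Perm (Fin 2),
    rename σ p = X 0 ^ 2 + C 2 * X 1 - X 1 ^ 2 ∨
    ∃ α : ℝ, 1 < α ∧ rename σ p = C α * X 0 + C α * X 1 - C (α - 1)

end Monomials

section LinePoly

open Polynomial

variable {R : Type*} [CommRing R]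

/-- `linePoly (i, j)` is `x ^ i * y ^ j` restricted to the line `x + y = 1`, parametrised by `x`. -/
noncomputable def linePoly (P : ℕ × ℕ) : R[X] := X ^ P.1 * (1 - X) ^ P.2

@[simp]
lemma eval_linePoly (P : ℕ × ℕ) (t : R) : (linePoly P).eval t = t ^ P.1 * (1 - t) ^ P.2 := by
  simp [linePoly]

@[simp]
lemma linePoly_zero : (linePoly (0, 0) : R[X]) = 1 := by
  simp [linePoly]

lemma linePoly_comp_one_sub_X (P : ℕ × ℕ) :
    (linePoly P : R[X]).comp (1 - X) = linePoly P.swap := by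
  simp [linePoly, mul_comm]

lemma coeff_one_sub_X_pow (n k : ℕ) :
    ((1 - X : R[X]) ^ n).coeff k = (-1 : R) ^ k * n.choose k := by
  have hterm (m : ℕ) : (-X : R[X]) ^ m * 1 ^ (n - m) * (n.choose m : R[X]) =
      C ((-1 : R) ^ m * n.choose m) * X ^ m := by
    simp only [neg_pow (X : R[X]), one_pow, mul_one, C_mul, C_pow, C_neg, C_1, ← C_eq_natCast]
    ring
  simp only [sub_eq_neg_add, add_pow, hterm, finsetSum_coeff, coeff_C_mul_X_pow,
    Finset.sum_ite_eq, Finset.mem_range]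
  split_ifs with hk
  · rfl
  · rw [Nat.choose_eq_zero_of_lt (by omega), Nat.cast_zero, mul_zero]

variable [IsDomain R]

lemma natDegree_one_sub_X : (1 - X : R[X]).natDegree = 1 := by
  rw [← neg_sub, natDegree_neg, ← C_1, natDegree_X_sub_C]

lemma one_sub_X_ne_zero : (1 - X : R[X]) ≠ 0 :=
  ne_zero_of_natDegree_gt (n := 0) (by rw [natDegree_one_sub_X]; omega)

lemma linePoly_ne_zero (P : ℕ × ℕ) : (linePoly P : R[X]) ≠ 0 :=
  mul_ne_zero (pow_ne_zero _ X_ne_zero) (pow_ne_zero _ one_sub_X_ne_zero)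

lemma natTrailingDegree_linePoly (P : ℕ × ℕ) :
    (linePoly P : R[X]).natTrailingDegree = P.1 := by
  have h : ((1 - X : R[X]) ^ P.2).natTrailingDegree = 0 :=
    natTrailingDegree_eq_zero.2 (Or.inr (by simp [coeff_zero_eq_eval_zero]))
  rw [linePoly, mul_comm, natTrailingDegree_mul_X_pow (pow_ne_zero _ one_sub_X_ne_zero), h,
    zero_add]

lemma natDegree_linePoly (P : ℕ × ℕ) : (linePoly P : R[X]).natDegree = P.1 + P.2 := by
  rw [linePoly, natDegree_mul (pow_ne_zero _ X_ne_zero) (pow_ne_zero _ one_sub_X_ne_zero),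
    natDegree_pow, natDegree_pow, natDegree_X, natDegree_one_sub_X, mul_one, mul_one]

lemma eq_of_C_mul_linePoly_eq {b c : R} {P Q : ℕ × ℕ} (hb : b ≠ 0)
    (h : C b * linePoly P = C c * linePoly Q) : P = Q := by
  have hc : c ≠ 0 := by
    rintro rfl
    simp [hb, linePoly_ne_zero] at h
  have h1 := congrArg natTrailingDegree h
  have h2 := congrArg natDegree h
  simp only [natTrailingDegree_mul (C_ne_zero.2 hb) (linePoly_ne_zero P),
    natTrailingDegree_mul (C_ne_zero.2 hc) (linePoly_ne_zero Q), natTrailingDegree_C,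
    natDegree_C_mul hb, natDegree_C_mul hc, natTrailingDegree_linePoly, natDegree_linePoly,
    zero_add] at h1 h2
  exact Prod.ext h1 (by omega)

end LinePoly

section Classification

open Polynomial

variable {a b c d : ℝ} {P Q N : ℕ × ℕ}

lemma C_mul_linePoly_add_C_mul_linePoly_ne_C (hQ : Q ≠ (0, 0)) (hN : N ≠ (0, 0)) (hQN : Q ≠ N)
    (hb : 0 < b) (hc : c < 0) : C b * linePoly Q + C c * linePoly N ≠ C d := by
  intro h
  -- Neither term is constant, so each of `b`, `c` occurs in at most one of the evaluations at
  -- `t = 0` and `t = 1`; as they have opposite signs, both evaluations can only agree at `0`.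
  have hd : d = 0 := by
    have e0 := congrArg (eval 0) h
    have e1 := congrArg (eval 1) h
    obtain ⟨q1, q2⟩ := Q
    obtain ⟨n1, n2⟩ := N
    simp only [eval_add, eval_mul, eval_C, eval_linePoly, zero_pow_eq, sub_zero, sub_self,
      one_pow, mul_one, one_mul] at e0 e1
    simp only [ne_eq, Prod.mk.injEq, not_and] at hQ hN
    split_ifs at e0 e1 <;> simp_all <;> linarith
  rw [hd, C_0] at h
  exact hQN (eq_of_C_mul_linePoly_eq (c := -c) hb.ne' (by rw [C_neg]; linear_combination h))

lemma pure_of_linePoly_add_eq_one (hP : P ≠ (0, 0)) (hQ : Q ≠ (0, 0)) (hc : c < 0)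
    (hE : C a * linePoly P + C b * linePoly Q + C c * linePoly N = 1) :
    (P.1 = 0 ∧ Q.2 = 0) ∨ (Q.1 = 0 ∧ P.2 = 0) := by
  have e0 := congrArg (eval 0) hE
  have e1 := congrArg (eval 1) hE
  obtain ⟨p1, p2⟩ := P
  obtain ⟨q1, q2⟩ := Q
  simp only [eval_add, eval_mul, eval_C, eval_linePoly, zero_pow_eq, sub_zero, sub_self,
    one_pow, mul_one, one_mul, eval_one] at e0 e1
  simp only [ne_eq, Prod.mk.injEq, not_and] at hP hQ ⊢
  split_ifs at e0 e1 <;> simp_all <;> linarith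

lemma eq_one_of_half_pow_add_half_pow_eq_one {i j : ℕ} (hi : i ≠ 0) (hj : j ≠ 0)
    (h : (1 / 2 : ℝ) ^ i + (1 / 2) ^ j = 1) : i = 1 ∧ j = 1 := by
  have key {m n : ℕ} : (1 / 2 : ℝ) ^ m ≤ (1 / 2) ^ n ↔ n ≤ m :=
    pow_le_pow_iff_right_of_lt_one₀ (by norm_num) (by norm_num)
  have hi1 : (1 / 2 : ℝ) ^ i ≤ (1 / 2) ^ 1 := key.2 (Nat.one_le_iff_ne_zero.2 hi)
  have hj1 : (1 / 2 : ℝ) ^ j ≤ (1 / 2) ^ 1 := key.2 (Nat.one_le_iff_ne_zero.2 hj)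
  have hi2 : i ≤ 1 := key.1 (by linarith)
  have hj2 : j ≤ 1 := key.1 (by linarith)
  omega

lemma eq_of_C_mul_one_sub_X_pow_add_eq_one {i j k : ℕ} (hi : i ≠ 0) (hj : j ≠ 0)
    (hk : k ≠ 0) (hik : i ≠ k) (hc : c < 0)
    (hE : C a * (1 - X) ^ j + C b * X ^ i + C c * X ^ k = 1) :
    a = 1 ∧ b = 2 ∧ c = -1 ∧ i = 1 ∧ j = 2 ∧ k = 2 := by
  obtain rfl : a = 1 := by simpa [hi, hk] using congrArg (eval 0) hE
  have e1 : b + c = 1 := by simpa [hj] using congrArg (eval 1) hE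
  have c1 : -(j : ℝ) + (if i = 1 then b else 0) + (if k = 1 then c else 0) = 0 := by
    simpa [coeff_one_sub_X_pow, coeff_X_pow, coeff_one, @eq_comm ℕ 1]
      using congrArg (coeff · 1) hE
  have c2 : (j.choose 2 : ℝ) + (if i = 2 then b else 0) + (if k = 2 then c else 0) = 0 := by
    simpa [coeff_one_sub_X_pow, coeff_X_pow, coeff_one, @eq_comm ℕ 2]
      using congrArg (coeff · 2) hE
  have hj1 : (1 : ℝ) ≤ j := by exact_mod_cast Nat.one_le_iff_ne_zero.2 hj
  obtain rfl : i = 1 := by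
    by_contra hi1
    rw [if_neg hi1] at c1
    split_ifs at c1 <;> linarith
  rw [if_pos rfl, if_neg hik.symm] at c1
  have hj2 : (1 : ℝ) < j := by linarith
  obtain rfl : k = 2 := by
    by_contra hk2
    rw [if_neg (by omega), if_neg hk2] at c2
    have : (0 : ℝ) < j.choose 2 := by exact_mod_cast Nat.choose_pos (by exact_mod_cast hj2)
    linarith
  rw [if_neg (by omega), if_pos rfl, Nat.cast_choose_two] at c2
  have : (j : ℝ) = 2 := by nlinarith
  exact ⟨rfl, by linarith, by linarith, rfl, by exact_mod_cast this, rfl⟩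

lemma isStandardSolution_of_pureY_pureX {i j : ℕ} (hi : i ≠ 0) (hj : j ≠ 0)
    (hPN : (0, j) ≠ N) (hQN : (i, 0) ≠ N) (hc : c < 0)
    (hE : C a * linePoly (0, j) + C b * linePoly (i, 0) + C c * linePoly N = 1) :
    IsStandardSolution (xyMonomial a (0, j) + xyMonomial b (i, 0) + xyMonomial c N) := by
  obtain ⟨k, l⟩ := N
  have e0 := congrArg (eval 0) hE
  have e1 := congrArg (eval 1) hE
  have eh := congrArg (eval (1 / 2)) hE
  rcases k with _ | k <;> rcases l with _ | l <;> norm_num [hi, hj] at e0 e1 eh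
  · obtain rfl : a = 1 - c := by linarith
    obtain rfl : b = 1 - c := by linarith
    obtain ⟨rfl, rfl⟩ : i = 1 ∧ j = 1 := by
      refine eq_one_of_half_pow_add_half_pow_eq_one hi hj ?_
      have h : (1 - c) * ((1 / 2 : ℝ) ^ i + (1 / 2) ^ j - 1) = 0 := by linear_combination eh
      linarith [(mul_eq_zero.1 h).resolve_left (by linarith)]
    refine ⟨1, Or.inr ⟨1 - c, by linarith, ?_⟩⟩
    simp only [Equiv.Perm.coe_one, MvPolynomial.rename_id, AlgHom.id_apply, xyMonomial, map_sub,
      map_one]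
    ring
  · -- the substitution `t ↦ 1 - t` exchanges `x` and `y`, reducing to the next case
    have hE' := congrArg (fun q => q.comp (1 - X)) hE
    simp only [add_comp, mul_comp, C_comp, one_comp, linePoly_comp_one_sub_X, Prod.swap] at hE'
    simp only [linePoly, pow_zero, mul_one, one_mul] at hE'
    obtain ⟨rfl, rfl, rfl, rfl, rfl, hl⟩ :=
      eq_of_C_mul_one_sub_X_pow_add_eq_one (a := b) (b := a) hj hi l.add_one_ne_zero
        (by rintro rfl; exact hPN rfl) hc (by linear_combination hE')
    obtain rfl : l = 1 := by omega
    refine ⟨1, Or.inl ?_⟩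
    simp only [Equiv.Perm.coe_one, MvPolynomial.rename_id, AlgHom.id_apply, xyMonomial, map_neg,
      map_one]
    ring
  · simp only [linePoly, pow_zero, mul_one, one_mul] at hE
    obtain ⟨rfl, rfl, rfl, rfl, rfl, hk⟩ := eq_of_C_mul_one_sub_X_pow_add_eq_one hi hj
      k.add_one_ne_zero (by rintro rfl; exact hQN rfl) hc hE
    obtain rfl : k = 1 := by omega
    refine ⟨Equiv.swap 0 1, Or.inl ?_⟩
    simp only [xyMonomial, map_add, map_mul, map_pow, map_neg, map_one, MvPolynomial.rename_C,
      MvPolynomial.rename_X, Equiv.swap_apply_left, Equiv.swap_apply_right]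
    ring
  · -- at `t = 1/2` the pure powers contribute at most `1/2` each and the mixed term is negative
    subst e0 e1
    have hi' := pow_le_of_le_one (by norm_num : (0 : ℝ) ≤ 1 / 2) (by norm_num) hi
    have hj' := pow_le_of_le_one (by norm_num : (0 : ℝ) ≤ 1 / 2) (by norm_num) hj
    have hN : 0 < (1 / 2 : ℝ) ^ (k + 1) * (1 / 2) ^ (l + 1) := by positivity
    nlinarith

lemma isStandardSolution_of_linePoly_add_eq_one (hPQ : P ≠ Q) (hPN : P ≠ N) (hQN : Q ≠ N)
    (ha : 0 < a) (hb : 0 < b) (hc : c < 0)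
    (hE : C a * linePoly P + C b * linePoly Q + C c * linePoly N = 1) :
    IsStandardSolution (xyMonomial a P + xyMonomial b Q + xyMonomial c N) := by
  have hP : P ≠ (0, 0) := by
    rintro rfl
    refine C_mul_linePoly_add_C_mul_linePoly_ne_C (d := 1 - a) hPQ.symm hPN.symm hQN hb hc ?_
    rw [linePoly_zero, mul_one] at hE
    rw [C_sub, C_1]
    linear_combination hE
  have hQ : Q ≠ (0, 0) := by
    rintro rfl
    refine C_mul_linePoly_add_C_mul_linePoly_ne_C (d := 1 - b) hP hQN.symm hPN ha hc ?_
    rw [linePoly_zero, mul_one] at hE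
    rw [C_sub, C_1]
    linear_combination hE
  obtain ⟨hP1, hQ2⟩ | ⟨hQ1, hP2⟩ := pure_of_linePoly_add_eq_one hP hQ hc hE
  · obtain ⟨_, j⟩ := P
    obtain ⟨i, _⟩ := Q
    subst hP1 hQ2
    exact isStandardSolution_of_pureY_pureX (by simpa using hQ) (by simpa using hP) hPN hQN hc hE
  · obtain ⟨i, _⟩ := P
    obtain ⟨_, j⟩ := Q
    subst hQ1 hP2
    rw [add_comm (xyMonomial a _)]
    exact isStandardSolution_of_pureY_pureX (by simpa using hP) (by simpa using hQ) hQN hPN hc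
      (by linear_combination hE)

end Classification

open MvPolynomial

theorem stmt_7 (p : MvPolynomial (Fin 2) ℝ)
    (hpos : (p.support.filter fun m => 0 < coeff m p).card = 2)
    (hneg : (p.support.filter fun m => coeff m p < 0).card = 1)
    (hone : ∀ x y : ℝ, x + y = 1 → eval ![x, y] p = 1) :
    ∃ σ : Equiv.Perm (Fin 2),
      rename σ p = X 0 ^ 2 + C 2 * X 1 - X 1 ^ 2 ∨
      ∃ α : ℝ, 1 < α ∧ rename σ p = C α * X 0 + C α * X 1 - C (α - 1) := by
  obtain ⟨u, v, w, huv, huw, hvw, ha, hb, hc, hp⟩ :=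
    exists_eq_monomial_add_monomial_add_monomial hpos hneg
  simp only [monomial_eq_xyMonomial] at hp
  rw [hp] at hone ⊢
  refine isStandardSolution_of_linePoly_add_eq_one (injective_fin_two_finsupp.ne huv)
    (injective_fin_two_finsupp.ne huw) (injective_fin_two_finsupp.ne hvw) ha hb hc ?_
  refine Polynomial.funext fun t => ?_
  simpa [xyMonomial, mul_assoc] using hone t (1 - t) (by ring)
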